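/- There exists a constant c > 0 such that for every integer n ≥ 2 the following holds. Let d be the comb leaf metric on {1,…,n} with parameter M = n. If G is a simple graph on {1,…,n} that is a 2-spanner of ({1,…,n}, d), i.e., with each edge {x,y} of length d(x,y) the walk-distance satisfies d_G(x,y) ≤ 2·d(x,y) for all x,y, then G has at least c·n·log₂ n edges. -/

import Mathlib

/-!
With `M = n` every edge is longer than `2n`, so in a 2-spanner two spine points `i, j` at spine
distance `D` are joined by an edge or by a two-edge path whose total spine length is at most `2D`.
Either way some edge at `i` or `j` has spine length `L` with `D ≤ 2L < 4D`. For `D = 4 ^ t ≤ n / 2`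
the `n - D` pairs `(i, i + D)` therefore force `n / 8` edges with `⌊log₄ 2L⌋ = t`, and summing
over the `log₄ (n / 2) + 1` scales gives `n log₂ n / 24` edges.
-/

open scoped ENNReal

/-- The total length of a walk with respect to an edge-length function. -/
noncomputable def walkLen {V : Type*} {G : SimpleGraph V} {x y : V}
    (len : V → V → ℝ≥0∞) (p : G.Walk x y) : ℝ≥0∞ :=
  (p.darts.map (fun d => len d.toProd.1 d.toProd.2)).sum

/-- Walk-distance in a graph with edge lengths: the infimum over walks of the total
length (`∞` if no walk exists). -/
noncomputable def gdist {V : Type*} (G : SimpleGraph V) (len : V → V → ℝ≥0∞)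
    (x y : V) : ℝ≥0∞ :=
  ⨅ p : G.Walk x y, walkLen len p

/-- The comb leaf metric on `{1,…,n}` with parameter `M`:
`d(i,j) = 2M + |i−j|` for `i ≠ j`, and `d(i,i) = 0`. -/
def combLeafD (n M : ℕ) (i j : Fin n) : ℝ :=
  if i = j then 0 else 2 * M + |(i.val : ℝ) - (j.val : ℝ)|

open Finset

section Walks

variable {V : Type*} {G : SimpleGraph V} {len : V → V → ℝ≥0∞}

@[simp]
lemma walkLen_nil {x : V} : walkLen len (SimpleGraph.Walk.nil : G.Walk x x) = 0 := rfl

@[simp]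
lemma walkLen_cons {x y z : V} (h : G.Adj x y) (p : G.Walk y z) :
    walkLen len (.cons h p) = len x y + walkLen len p := rfl

lemma length_mul_le_walkLen {m : ℝ≥0∞} (hm : ∀ a b, G.Adj a b → m ≤ len a b) {x y : V}
    (p : G.Walk x y) : p.length * m ≤ walkLen len p := by
  induction p with
  | nil => simp
  | cons h p ih =>
    rw [walkLen_cons, SimpleGraph.Walk.length_cons, Nat.cast_succ, add_mul, one_mul, add_comm]
    exact add_le_add (hm _ _ h) ih

lemma exists_walk_length_le_two_of_gdist_lt {m B : ℝ≥0∞} (hm : ∀ a b, G.Adj a b → m ≤ len a b)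
    {x y : V} (hB : gdist G len x y < B) (hB3 : B ≤ 3 * m) :
    ∃ p : G.Walk x y, p.length ≤ 2 ∧ walkLen len p < B := by
  obtain ⟨p, hp⟩ := iInf_lt_iff.mp hB
  refine ⟨p, ?_, hp⟩
  by_contra! hlen
  have h3 : (3 : ℝ≥0∞) ≤ p.length := by exact_mod_cast hlen
  have := (mul_le_mul_left h3 m).trans (length_mul_le_walkLen hm p)
  exact absurd (hp.trans_le hB3) (not_lt.mpr this)

end Walks

def IsSpanner {V : Type*} (G : SimpleGraph V) (d : V → V → ℝ) (t : ℝ) : Prop :=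
  ∀ x y, gdist G (fun a b => ENNReal.ofReal (d a b)) x y ≤ ENNReal.ofReal (t * d x y)

lemma Nat.cast_dist (a b : ℕ) : (a.dist b : ℝ) = |(a : ℝ) - b| := by
  unfold Nat.dist
  rcases le_total a b with h | h
  · rw [Nat.sub_eq_zero_of_le h, zero_add, Nat.cast_sub h, abs_sub_comm, abs_of_nonneg]
    exact sub_nonneg.mpr (by exact_mod_cast h)
  · rw [Nat.sub_eq_zero_of_le h, add_zero, Nat.cast_sub h, abs_of_nonneg]
    exact sub_nonneg.mpr (by exact_mod_cast h)

lemma combLeafD_of_ne {n M : ℕ} {i j : Fin n} (h : i ≠ j) :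
    combLeafD n M i j = 2 * M + (i.val.dist j.val : ℕ) := by
  rw [combLeafD, if_neg h, Nat.cast_dist]

lemma Fin.one_le_dist_val {n : ℕ} {i j : Fin n} (h : i ≠ j) : 1 ≤ i.val.dist j.val := by
  have := Fin.val_ne_of_ne h
  unfold Nat.dist
  omega

/-- Every edge is longer than `2n`, so three edges already exceed `2 d(i, j) ≤ 4n + 2(n - 1)`. -/
lemma IsSpanner.adj_or_exists_two_hop {n : ℕ} {G : SimpleGraph (Fin n)}
    (H : IsSpanner G (combLeafD n n) 2) {i j : Fin n} (hij : i ≠ j) :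
    G.Adj i j ∨ ∃ k, G.Adj i k ∧ G.Adj k j ∧
      i.val.dist k.val + k.val.dist j.val ≤ 2 * i.val.dist j.val := by
  set D := i.val.dist j.val
  have hDn : D + 1 ≤ n := by have := i.isLt; have := j.isLt; unfold D Nat.dist; omega
  have hm : ∀ a b, G.Adj a b →
      ENNReal.ofReal (2 * n + 1) ≤ ENNReal.ofReal (combLeafD n n a b) := by
    intro a b hab
    rw [combLeafD_of_ne hab.ne]
    gcongr
    exact_mod_cast Fin.one_le_dist_val hab.ne
  have hB : gdist G (fun a b => ENNReal.ofReal (combLeafD n n a b)) i j <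
      ENNReal.ofReal (4 * n + 2 * D + 1) := by
    refine (H i j).trans_lt ((ENNReal.ofReal_lt_ofReal_iff (by positivity)).mpr ?_)
    rw [combLeafD_of_ne hij]
    linarith
  have hB3 : ENNReal.ofReal (4 * n + 2 * D + 1) ≤ 3 * ENNReal.ofReal (2 * n + 1) := by
    rw [← ENNReal.ofReal_ofNat 3, ← ENNReal.ofReal_mul (by norm_num)]
    gcongr
    have : (D : ℝ) + 1 ≤ n := by exact_mod_cast hDn
    linarith
  obtain ⟨p, hp2, hp⟩ := exists_walk_length_le_two_of_gdist_lt hm hB hB3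
  match p, hp2, hp with
  | .nil, _, _ => exact absurd rfl hij
  | .cons h .nil, _, _ => exact .inl h
  | .cons (v := k) hik (.cons hkj .nil), _, hp =>
    refine .inr ⟨k, hik, hkj, ?_⟩
    rw [walkLen_cons, walkLen_cons, walkLen_nil, add_zero, combLeafD_of_ne hik.ne,
      combLeafD_of_ne hkj.ne, ← ENNReal.ofReal_add (by positivity) (by positivity),
      ENNReal.ofReal_lt_ofReal_iff (by positivity)] at hp
    have : ((i.val.dist k.val + k.val.dist j.val : ℕ) : ℝ) < (2 * D + 1 : ℕ) := by
      push_cast; linarith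
    exact Nat.lt_succ_iff.mp (by exact_mod_cast this)

def spineLength {n : ℕ} : Sym2 (Fin n) → ℕ :=
  Sym2.lift ⟨fun a b => a.val.dist b.val, fun _ _ => Nat.dist_comm _ _⟩

@[simp]
lemma spineLength_mk {n : ℕ} (a b : Fin n) : spineLength s(a, b) = a.val.dist b.val := rfl

lemma IsSpanner.exists_edge_comparable {n : ℕ} {G : SimpleGraph (Fin n)}
    (H : IsSpanner G (combLeafD n n) 2) {i j : Fin n} (hij : i ≠ j) :
    ∃ e ∈ G.edgeSet, (i ∈ e ∨ j ∈ e) ∧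
      i.val.dist j.val ≤ 2 * spineLength e ∧ spineLength e < 2 * i.val.dist j.val := by
  have hD := Fin.one_le_dist_val hij
  rcases H.adj_or_exists_two_hop hij with hadj | ⟨k, hik, hkj, hk⟩
  · exact ⟨s(i, j), hadj, .inl (Sym2.mem_mk_left _ _), by simp; omega, by simp; omega⟩
  · have hik1 := Fin.one_le_dist_val hik.ne
    have hkj1 := Fin.one_le_dist_val hkj.ne
    have htri : i.val.dist j.val ≤ i.val.dist k.val + k.val.dist j.val := by
      unfold Nat.dist; omega
    rcases le_total (i.val.dist k.val) (k.val.dist j.val) with hle | hle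
    · exact ⟨s(k, j), hkj, .inr (Sym2.mem_mk_right _ _), by simp; omega, by simp; omega⟩
    · exact ⟨s(i, k), hik, .inl (Sym2.mem_mk_left _ _), by simp; omega, by simp; omega⟩

/-- `E` touches at most `2 #E` vertices, and each of them is `u i` or `v i` for at most two `i`. -/
lemma card_le_four_mul_card_of_forall_exists_mem {ι α : Type*} [Fintype ι] [DecidableEq α]
    {E : Finset (Sym2 α)} {u v : ι → α} (hu : u.Injective) (hv : v.Injective)
    (hcover : ∀ i, ∃ e ∈ E, u i ∈ e ∨ v i ∈ e) : Fintype.card ι ≤ 4 * #E := by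
  classical
  set W := E.biUnion Sym2.toFinset
  have hW : #W ≤ 2 * #E := by
    refine card_biUnion_le.trans ?_
    rw [mul_comm, ← smul_eq_mul, ← sum_const]
    refine sum_le_sum fun e _ => ?_
    induction e using Sym2.ind with
    | _ x y => rw [Sym2.toFinset_mk_eq]; exact card_le_two
  have hsub : (univ : Finset ι) ⊆ W.preimage u hu.injOn ∪ W.preimage v hv.injOn := by
    intro i _
    obtain ⟨e, he, hi⟩ := hcover i
    simp only [mem_union, mem_preimage, W, mem_biUnion, Sym2.mem_toFinset]
    exact hi.imp (⟨e, he, ·⟩) (⟨e, he, ·⟩)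
  calc Fintype.card ι = #(univ : Finset ι) := card_univ.symm
    _ ≤ #(W.preimage u hu.injOn) + #(W.preimage v hv.injOn) := (card_le_card hsub).trans
        (card_union_le _ _)
    _ ≤ #W + #W := add_le_add (card_le_card_of_injOn u (fun _ h => mem_preimage.mp h) hu.injOn)
        (card_le_card_of_injOn v (fun _ h => mem_preimage.mp h) hv.injOn)
    _ ≤ 4 * #E := by omega

lemma IsSpanner.sub_le_four_mul_card_scale {n : ℕ} {G : SimpleGraph (Fin n)} [DecidableRel G.Adj]
    (H : IsSpanner G (combLeafD n n) 2) {t : ℕ} (ht : 4 ^ t ≤ n) :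
    n - 4 ^ t ≤ 4 * #{e ∈ G.edgeFinset | Nat.log 4 (2 * spineLength e) = t} := by
  set D := 4 ^ t
  have hD : 1 ≤ D := Nat.one_le_pow _ _ (by norm_num)
  let u : Fin (n - D) → Fin n := Fin.castLE (by omega)
  let v : Fin (n - D) → Fin n := fun i => ⟨i + D, by omega⟩
  have hv : v.Injective := fun a b h => Fin.ext (by simpa [v] using h)
  simpa using card_le_four_mul_card_of_forall_exists_mem (Fin.castLE_injective _) hv fun i => by
    obtain ⟨e, he, hmem, hlo, hhi⟩ := H.exists_edge_comparable (i := u i) (j := v i)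
      (Fin.ne_of_val_ne (by simp [u, v]; omega))
    have hdist : (u i).val.dist (v i).val = D := by simp [u, v, Nat.dist]
    refine ⟨e, mem_filter.mpr ⟨G.mem_edgeFinset.mpr he, ?_⟩, hmem⟩
    rw [hdist] at hlo hhi
    refine (Nat.log_eq_iff (.inr ⟨by norm_num, by omega⟩)).mpr ⟨hlo, ?_⟩
    rw [pow_succ]
    omega

/-- The scales `4 ^ t ≤ n / 2` each contribute `n / 8` edges, and an edge has only one scale. -/
lemma IsSpanner.mul_le_card_edgeFinset {n : ℕ} (hn : 2 ≤ n) {G : SimpleGraph (Fin n)}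
    [DecidableRel G.Adj] (H : IsSpanner G (combLeafD n n) 2) :
    (Nat.log 4 (n / 2) + 1) * n ≤ 8 * #G.edgeFinset := by
  set T := Nat.log 4 (n / 2)
  have hscale : ∀ t ∈ range (T + 1), 4 ^ t ≤ n / 2 := fun t ht =>
    (Nat.pow_le_pow_right (by norm_num) (by simpa [Nat.lt_succ_iff] using ht)).trans
      (Nat.pow_log_le_self 4 (by omega))
  calc (T + 1) * n = ∑ _t ∈ range (T + 1), n := by simp
    _ ≤ ∑ t ∈ range (T + 1), 8 * #{e ∈ G.edgeFinset | Nat.log 4 (2 * spineLength e) = t} := by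
        refine sum_le_sum fun t ht => ?_
        have := hscale t ht
        have := H.sub_le_four_mul_card_scale (t := t) (by omega)
        omega
    _ = 8 * #{e ∈ G.edgeFinset | Nat.log 4 (2 * spineLength e) ∈ range (T + 1)} := by
        rw [← mul_sum, sum_card_fiberwise_eq_card_filter]
    _ ≤ 8 * #G.edgeFinset := Nat.mul_le_mul_left _ (card_filter_le _ _)

lemma Real.logb_two_natCast_le (n : ℕ) : Real.logb 2 n ≤ 3 * (Nat.log 4 (n / 2) + 1) := by
  rcases Nat.eq_zero_or_pos n with rfl | hn
  · simp
  set T := Nat.log 4 (n / 2)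
  have hlt : n / 2 < 4 ^ (T + 1) := Nat.lt_pow_succ_log_self (by norm_num) _
  have hpow : n ≤ 2 ^ (2 * T + 3) := by
    have : 2 ^ (2 * T + 3) = 2 * 4 ^ (T + 1) := by
      rw [show 2 * T + 3 = 2 * (T + 1) + 1 by ring, pow_succ, pow_mul]
      norm_num [mul_comm]
    omega
  calc Real.logb 2 n ≤ (2 * T + 3 : ℕ) := by
        rw [Real.logb_le_iff_le_rpow (by norm_num) (by exact_mod_cast hn), Real.rpow_natCast]
        exact_mod_cast hpow
    _ ≤ 3 * (T + 1) := by push_cast; linarith [(T.cast_nonneg : (0 : ℝ) ≤ T)]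

/-- There is a constant `c > 0` such that for every `n ≥ 2`,
every simple graph on `{1,…,n}` that is a 2-spanner of the comb leaf metric with
parameter `M = n` (each edge having length equal to the metric distance of its
endpoints) has at least `c·n·log₂ n` edges. -/
theorem comb_leaf_two_spanner_lower_bound :
    ∃ c : ℝ, 0 < c ∧
      ∀ n : ℕ, 2 ≤ n →
      ∀ G : SimpleGraph (Fin n),
        (∀ x y : Fin n,
          gdist G (fun a b => ENNReal.ofReal (combLeafD n n a b)) x y ≤
            ENNReal.ofReal (2 * combLeafD n n x y)) →
        c * n * Real.logb 2 n ≤ (G.edgeSet.ncard : ℝ) := by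
  classical
  refine ⟨1 / 24, by norm_num, fun n hn G H => ?_⟩
  have hcount : ((Nat.log 4 (n / 2) + 1 : ℕ) : ℝ) * n ≤ 8 * #G.edgeFinset := by
    exact_mod_cast IsSpanner.mul_le_card_edgeFinset hn H
  have hlog := Real.logb_two_natCast_le n
  rw [← SimpleGraph.coe_edgeFinset, Set.ncard_coe_finset]
  push_cast at hcount
  nlinarith [(n.cast_nonneg : (0 : ℝ) ≤ n)]
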